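/- Expressiveness for assignment: for any quantifier-free symbolic heap ψ, WPO⟦ψ, x := t, ok⟧ equals the set of states satisfying ∃x'. ψ[x := x'] * x ≈ (t[x := x']), where x' is a fresh variable. -/
import Mathlib


/-- Variables -/
abbrev Var := String
/-- Locations -/
abbrev Loc := ℕ
/-- Values -/
abbrev Val := ℕ

/-- Terms: variables, the constant null, and numeric constants. -/
inductive Term where
  | var (x : Var)
  | null
  | const (n : ℕ)
deriving DecidableEq

/-- Stores: total functions from variables to values. -/
abbrev Store := Var → Val

/-- Heaps: partial functions from locations to values or ⊥.
`none` = not in domain, `some none` = ⊥ (deallocated), `some (some v)` = value `v`. -/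
abbrev Heap := Loc → Option (Option Val)

def Term.eval (s : Store) : Term → Val
  | .var x => s x
  | .null => 0
  | .const n => n

def Store.upd (s : Store) (x : Var) (v : Val) : Store :=
  fun y => if y = x then v else s y

def Heap.emptyH : Heap := fun _ => none

def Heap.dom (h : Heap) : Set Loc := {l | h l ≠ none}

def Heap.domPos (h : Heap) : Set Loc := {l | ∃ v : Val, h l = some (some v)}

def Heap.disj (h₁ h₂ : Heap) : Prop := Heap.dom h₁ ∩ Heap.dom h₂ = ∅

def Heap.comp (h₁ h₂ : Heap) : Heap :=
  fun l => match h₁ l with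
    | some v => some v
    | none => h₂ l

def Heap.upd (h : Heap) (l : Loc) (v : Option Val) : Heap :=
  fun l' => if l' = l then some v else h l'

def Heap.single (l : Loc) (v : Option Val) : Heap :=
  fun l' => if l' = l then some v else none

/-- Atomic formulas of quantifier-free symbolic heaps. -/
inductive Atom where
  | emp
  | pt (t u : Term)      -- t ↦ u
  | npt (t : Term)       -- t ↛  (negative heap assertion)
  | eq (t u : Term)      -- t ≈ u
  | neq (t u : Term)     -- t ≉ u
deriving DecidableEq

/-- Quantifier-free symbolic heap: a ∗-conjunction of atoms. -/
abbrev SymHeap := List Atom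

def Atom.sat (s : Store) (h : Heap) : Atom → Prop
  | .emp => h = Heap.emptyH
  | .pt t u => h = Heap.single (t.eval s) (some (u.eval s))
  | .npt t => h = Heap.single (t.eval s) none
  | .eq t u => t.eval s = u.eval s ∧ h = Heap.emptyH
  | .neq t u => t.eval s ≠ u.eval s ∧ h = Heap.emptyH

def SymHeap.sat (s : Store) (h : Heap) : SymHeap → Prop
  | [] => h = Heap.emptyH
  | a :: ψ => ∃ h₁ h₂, Heap.disj h₁ h₂ ∧ h = Heap.comp h₁ h₂ ∧
      Atom.sat s h₁ a ∧ SymHeap.sat s h₂ ψ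

def Term.subst (t : Term) (x : Var) (r : Term) : Term :=
  match t with
  | .var y => if y = x then r else .var y
  | t => t

def Atom.subst (a : Atom) (x : Var) (r : Term) : Atom :=
  match a with
  | .emp => .emp
  | .pt t u => .pt (t.subst x r) (u.subst x r)
  | .npt t => .npt (t.subst x r)
  | .eq t u => .eq (t.subst x r) (u.subst x r)
  | .neq t u => .neq (t.subst x r) (u.subst x r)

def SymHeap.subst (ψ : SymHeap) (x : Var) (r : Term) : SymHeap :=
  ψ.map (Atom.subst · x r)

def Term.fv : Term → Set Var
  | .var x => {x}
  | _ => ∅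

def Atom.fv : Atom → Set Var
  | .emp => ∅
  | .pt t u => t.fv ∪ u.fv
  | .npt t => t.fv
  | .eq t u => t.fv ∪ u.fv
  | .neq t u => t.fv ∪ u.fv

def SymHeap.fv (ψ : SymHeap) : Set Var := ⋃ a ∈ ψ, Atom.fv a

/-- Commands of the ISL programming language. -/
inductive Com where
  | skip
  | assign (x : Var) (t : Term)       -- x := t
  | havoc (x : Var)                   -- x := *
  | assm (B : SymHeap)                -- assume(B), B a pure formula
  | localv (x : Var) (C : Com)        -- local x in C
  | seq (C₁ C₂ : Com)
  | choice (C₁ C₂ : Com)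
  | star (C : Com)
  | alloc (x : Var)                   -- x := alloc()
  | free (x : Var)
  | load (x y : Var)                  -- x := [y]
  | store (x : Var) (t : Term)        -- [x] := t
  | error

/-- Exit conditions. -/
inductive ExitCond where
  | ok
  | er
deriving DecidableEq

abbrev State := Store × Heap
abbrev ISLRel := State → State → Prop

def relComp (R₁ R₂ : ISLRel) : ISLRel := fun a c => ∃ b, R₁ a b ∧ R₂ b c

def relIter (R : ISLRel) : ℕ → ISLRel
  | 0 => fun a b => a = b
  | n + 1 => relComp R (relIter R n)

/-- `s ⊨ B` for a pure formula `B`: satisfaction in the empty heap. -/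
def pureSat (s : Store) (B : SymHeap) : Prop := SymHeap.sat s Heap.emptyH B

/-- A pure formula: a ∗-conjunction of (in)equalities. -/
def isPure (B : SymHeap) : Prop :=
  ∀ a ∈ B, ∃ t u, a = Atom.eq t u ∨ a = Atom.neq t u

/-- Denotational semantics ⟦C⟧_ε of ISL commands. -/
def sem : Com → ExitCond → ISLRel
  | .skip, .ok => fun σ σ' => σ' = σ
  | .skip, .er => fun _ _ => False
  | .assign x t, .ok => fun σ σ' => σ' = (Store.upd σ.1 x (Term.eval σ.1 t), σ.2)
  | .assign _ _, .er => fun _ _ => False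
  | .havoc x, .ok => fun σ σ' => ∃ v : Val, σ' = (Store.upd σ.1 x v, σ.2)
  | .havoc _, .er => fun _ _ => False
  | .assm B, .ok => fun σ σ' => σ' = σ ∧ pureSat σ.1 B
  | .assm _, .er => fun _ _ => False
  | .localv x C, ε => fun σ σ' =>
      ∃ v v' : Val, sem C ε (Store.upd σ.1 x v, σ.2) (Store.upd σ'.1 x v', σ'.2) ∧
        σ.1 x = σ'.1 x
  | .seq C₁ C₂, .ok => relComp (sem C₁ .ok) (sem C₂ .ok)
  | .seq C₁ C₂, .er => fun σ σ' =>
      sem C₁ .er σ σ' ∨ relComp (sem C₁ .ok) (sem C₂ .er) σ σ'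
  | .choice C₁ C₂, ε => fun σ σ' => sem C₁ ε σ σ' ∨ sem C₂ ε σ σ'
  | .star C, .ok => fun σ σ' => ∃ n, relIter (sem C .ok) n σ σ'
  | .star C, .er => fun σ σ' => ∃ n, relComp (relIter (sem C .ok) n) (sem C .er) σ σ'
  | .alloc x, .ok => fun σ σ' =>
      ∃ (l : Loc) (v : Val), (σ.2 l = none ∨ σ.2 l = some none) ∧
        σ' = (Store.upd σ.1 x l, Heap.upd σ.2 l (some v))
  | .alloc _, .er => fun _ _ => False
  | .free x, .ok => fun σ σ' =>
      σ.1 x ∈ Heap.domPos σ.2 ∧ σ' = (σ.1, Heap.upd σ.2 (σ.1 x) none)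
  | .free x, .er => fun σ σ' => σ.1 x ∉ Heap.domPos σ.2 ∧ σ' = σ
  | .load x y, .ok => fun σ σ' =>
      ∃ v : Val, σ.2 (σ.1 y) = some (some v) ∧ σ' = (Store.upd σ.1 x v, σ.2)
  | .load _ y, .er => fun σ σ' => σ.1 y ∉ Heap.domPos σ.2 ∧ σ' = σ
  | .store x t, .ok => fun σ σ' =>
      σ.1 x ∈ Heap.domPos σ.2 ∧ σ' = (σ.1, Heap.upd σ.2 (σ.1 x) (some (Term.eval σ.1 t)))
  | .store x _, .er => fun σ σ' => σ.1 x ∉ Heap.domPos σ.2 ∧ σ' = σ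
  | .error, .ok => fun _ _ => False
  | .error, .er => fun σ σ' => σ' = σ

/-- Free variables of a command. -/
def Com.fv : Com → Set Var
  | .skip => ∅
  | .assign x t => {x} ∪ Term.fv t
  | .havoc x => {x}
  | .assm B => SymHeap.fv B
  | .localv x C => Com.fv C \ {x}
  | .seq C₁ C₂ => Com.fv C₁ ∪ Com.fv C₂
  | .choice C₁ C₂ => Com.fv C₁ ∪ Com.fv C₂
  | .star C => Com.fv C
  | .alloc x => {x}
  | .free x => {x}
  | .load x y => {x} ∪ {y}
  | .store x t => {x} ∪ Term.fv t
  | .error => ∅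

/-- Variables modified by a command. -/
def Com.mod : Com → Set Var
  | .skip => ∅
  | .assign x _ => {x}
  | .havoc x => {x}
  | .assm _ => ∅
  | .localv x C => Com.mod C \ {x}
  | .seq C₁ C₂ => Com.mod C₁ ∪ Com.mod C₂
  | .choice C₁ C₂ => Com.mod C₁ ∪ Com.mod C₂
  | .star C => Com.mod C
  | .alloc x => {x}
  | .free _ => ∅
  | .load x _ => {x}
  | .store _ _ => ∅
  | .error => ∅

/-- Semantic weakest postcondition. -/
def WPO (P : State → Prop) (C : Com) (ε : ExitCond) : Set State :=
  {σ' | ∃ σ, P σ ∧ sem C ε σ σ'}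

/-- Satisfaction of a symbolic heap as a predicate on states. -/
def satSH (ψ : SymHeap) : State → Prop := fun σ => SymHeap.sat σ.1 σ.2 ψ

/-- Satisfaction of an existentially quantified symbolic heap `∃ x⃗. ψ`. -/
def satEx (s : Store) (h : Heap) : List Var → SymHeap → Prop
  | [], ψ => SymHeap.sat s h ψ
  | x :: xs, ψ => ∃ v : Val, satEx (Store.upd s x v) h xs ψ

/-- Terms over a set of variables, together with null. -/
def termsOf (V : Set Var) : Set Term := {Term.null} ∪ (Term.var '' V)

/-- Canonical forms: symbolic heaps containing `t ≈ u` or `t ≉ u`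
for every pair of terms over `V ∪ {null}`. -/
def CFsh (V : Set Var) : Set SymHeap :=
  {ψ | ∀ t ∈ termsOf V, ∀ u ∈ termsOf V, Atom.eq t u ∈ ψ ∨ Atom.neq t u ∈ ψ}

/-- Complete case analyses `Π(V)`: pure formulas deciding every pair of terms
over `V ∪ {null}`, with the equality part reflexive and symmetric. -/
def PiCA (V : Set Var) : Set SymHeap :=
  {π | (∀ a ∈ π, ∃ t ∈ termsOf V, ∃ u ∈ termsOf V, a = Atom.eq t u ∨ a = Atom.neq t u)
    ∧ (∀ t ∈ termsOf V, ∀ u ∈ termsOf V,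
        (Atom.eq t u ∈ π ∧ Atom.neq t u ∉ π) ∨ (Atom.neq t u ∈ π ∧ Atom.eq t u ∉ π))
    ∧ (∀ t ∈ termsOf V, Atom.eq t t ∈ π)
    ∧ (∀ t u, Atom.eq t u ∈ π → Atom.eq u t ∈ π)}

def SymHeap.satisfiable (ψ : SymHeap) : Prop := ∃ s h, SymHeap.sat s h ψ

/-- Case analysis `CA(ψ, C)`. -/
def CA (ψ : SymHeap) (C : Com) : Set SymHeap :=
  {φ | ∃ π ∈ PiCA (SymHeap.fv ψ ∪ Com.fv C), φ = π ++ ψ ∧ SymHeap.satisfiable φ}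

/-- Validity of ISL triples: `⊨ [P] C [ε : Q]`. -/
def validTriple (P : State → Prop) (C : Com) (ε : ExitCond) (Q : State → Prop) : Prop :=
  ∀ σ', Q σ' → ∃ σ, P σ ∧ sem C ε σ σ'

lemma Term.eval_subst (s : Store) (t : Term) (x : Var) (r : Term) :
    Term.eval s (t.subst x r) = Term.eval (Store.upd s x (Term.eval s r)) t := by
  cases t with
  | var y =>
      simp only [Term.subst, Store.upd, Term.eval]
      by_cases h : y = x <;> simp [h, Term.eval]
  | null => rfl
  | const n => rfl

lemma Term.eval_coincide {s s' : Store} {t : Term} (h : ∀ y ∈ t.fv, s y = s' y) :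
    Term.eval s t = Term.eval s' t := by
  cases t with
  | var y => exact h y (by simp [Term.fv])
  | null => rfl
  | const n => rfl

lemma Atom.sat_coincide {s s' : Store} {h : Heap} {a : Atom}
    (hc : ∀ y ∈ a.fv, s y = s' y) : Atom.sat s h a ↔ Atom.sat s' h a := by
  cases a <;> simp only [Atom.sat] <;>
    rw [Term.eval_coincide (s := s) (s' := s')] <;>
    try rw [Term.eval_coincide (s := s) (s' := s')]
  all_goals intro y hy; apply hc; simp [Atom.fv, hy]

lemma SymHeap.sat_coincide {s s' : Store} {h : Heap} {ψ : SymHeap}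
    (hc : ∀ y ∈ SymHeap.fv ψ, s y = s' y) : SymHeap.sat s h ψ ↔ SymHeap.sat s' h ψ := by
  induction ψ generalizing h with
  | nil => rfl
  | cons a ψ ih =>
      simp only [SymHeap.sat]
      constructor <;> rintro ⟨h₁, h₂, hd, hh, ha, hψ⟩ <;> refine ⟨h₁, h₂, hd, hh, ?_, ?_⟩
      · exact (Atom.sat_coincide (fun y hy => hc y (by simp [SymHeap.fv]; exact Or.inl hy))).mp ha
      · exact (ih (fun y hy => hc y (by simp [SymHeap.fv] at hy ⊢; tauto))).mp hψ
      · exact (Atom.sat_coincide (fun y hy => hc y (by simp [SymHeap.fv]; exact Or.inl hy))).mpr ha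
      · exact (ih (fun y hy => hc y (by simp [SymHeap.fv] at hy ⊢; tauto))).mpr hψ

lemma Atom.sat_subst (s : Store) (h : Heap) (a : Atom) (x : Var) (r : Term) :
    Atom.sat s h (a.subst x r) ↔ Atom.sat (Store.upd s x (Term.eval s r)) h a := by
  cases a <;> simp [Atom.subst, Atom.sat, Term.eval_subst]

lemma SymHeap.sat_subst (s : Store) (h : Heap) (ψ : SymHeap) (x : Var) (r : Term) :
    SymHeap.sat s h (ψ.subst x r) ↔ SymHeap.sat (Store.upd s x (Term.eval s r)) h ψ := by
  induction ψ generalizing h with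
  | nil => rfl
  | cons a ψ ih =>
      simp only [SymHeap.subst, List.map_cons, SymHeap.sat]
      constructor <;> rintro ⟨h₁, h₂, hd, hh, ha, hψ⟩
      · exact ⟨h₁, h₂, hd, hh, (Atom.sat_subst s h₁ a x r).mp ha, (ih h₂).mp hψ⟩
      · exact ⟨h₁, h₂, hd, hh, (Atom.sat_subst s h₁ a x r).mpr ha, (ih h₂).mpr hψ⟩

lemma Heap.comp_empty (h : Heap) : Heap.comp h Heap.emptyH = h := by
  funext l; simp only [Heap.comp, Heap.emptyH]; cases h l <;> rfl

lemma Heap.disj_empty (h : Heap) : Heap.disj h Heap.emptyH := by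
  simp [Heap.disj, Heap.dom, Heap.emptyH, Set.eq_empty_iff_forall_notMem]

lemma SymHeap.sat_append_eq (s : Store) (h : Heap) (ψ : SymHeap) (t u : Term) :
    SymHeap.sat s h (ψ ++ [Atom.eq t u]) ↔
      SymHeap.sat s h ψ ∧ Term.eval s t = Term.eval s u := by
  induction ψ generalizing h with
  | nil =>
      simp only [List.nil_append, SymHeap.sat, Atom.sat]
      constructor
      · rintro ⟨h₁, h₂, hd, hh, ⟨he, rfl⟩, rfl⟩
        exact ⟨by rw [hh, Heap.comp_empty], he⟩
      · rintro ⟨rfl, he⟩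
        exact ⟨Heap.emptyH, Heap.emptyH, Heap.disj_empty _, (Heap.comp_empty _).symm, ⟨he, rfl⟩, rfl⟩
  | cons a ψ ih =>
      simp only [List.cons_append, SymHeap.sat]
      constructor
      · rintro ⟨h₁, h₂, hd, hh, ha, hψ⟩
        obtain ⟨hψ', he⟩ := (ih h₂).mp hψ
        exact ⟨⟨h₁, h₂, hd, hh, ha, hψ'⟩, he⟩
      · rintro ⟨⟨h₁, h₂, hd, hh, ha, hψ'⟩, he⟩
        exact ⟨h₁, h₂, hd, hh, ha, (ih h₂).mpr ⟨hψ', he⟩⟩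


/-- expressiveness for assignment. -/
theorem WPO_assign (ψ : SymHeap) (x x' : Var) (t : Term)
    (hne : x' ≠ x) (hψ : x' ∉ SymHeap.fv ψ) (ht : x' ∉ Term.fv t) :
    WPO (satSH ψ) (Com.assign x t) .ok =
      {σ' | ∃ v : Val, SymHeap.sat (Store.upd σ'.1 x' v) σ'.2
        (SymHeap.subst ψ x (Term.var x') ++ [Atom.eq (Term.var x) (Term.subst t x (Term.var x'))])} := by
  ext σ'
  simp only [WPO, sem, Set.mem_setOf_eq, satSH]
  constructor
  · rintro ⟨σ, hsat, rfl⟩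
    refine ⟨σ.1 x, ?_⟩
    rw [SymHeap.sat_append_eq]
    set s' : Store := Store.upd σ.1 x (Term.eval σ.1 t) with hs'
    set s₀ : Store := Store.upd s' x' (σ.1 x) with hs₀
    have hcoin : ∀ y, y ≠ x' → Store.upd s₀ x (σ.1 x) y = σ.1 y := by
      intro y hy
      by_cases hyx : y = x
      · simp [hyx, Store.upd]
      · simp [Store.upd, hyx, hy, hs₀, hs']
    constructor
    · rw [SymHeap.sat_subst]
      have hx' : Term.eval s₀ (Term.var x') = σ.1 x := by
        simp [Term.eval, hs₀, Store.upd]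
      rw [hx', SymHeap.sat_coincide (s' := σ.1)]
      · exact hsat
      · exact fun y hy => hcoin y (fun h => hψ (h ▸ hy))
    · have h1 : Term.eval s₀ (Term.var x) = Term.eval σ.1 t := by
        simp [Term.eval, hs₀, hs', Store.upd, hne.symm]
      have h2 : Term.eval s₀ (Term.subst t x (Term.var x')) = Term.eval σ.1 t := by
        rw [Term.eval_subst]
        have : Term.eval s₀ (Term.var x') = σ.1 x := by
          simp [Term.eval, hs₀, Store.upd]
        rw [this]
        exact Term.eval_coincide (fun y hy => hcoin y (fun h => ht (h ▸ hy)))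
      rw [h1, h2]
  · rintro ⟨v, hsat⟩
    rw [SymHeap.sat_append_eq] at hsat
    obtain ⟨hψsat, heq⟩ := hsat
    set s₀ : Store := Store.upd σ'.1 x' v with hs₀
    set s : Store := Store.upd σ'.1 x v with hs
    have hcoin : ∀ y, y ≠ x' → Store.upd s₀ x v y = s y := by
      intro y hy
      by_cases hyx : y = x
      · simp [hyx, Store.upd, hs]
      · simp [Store.upd, hyx, hy, hs₀, hs]
    have hψs : SymHeap.sat s σ'.2 ψ := by
      rw [SymHeap.sat_subst] at hψsat
      have hx' : Term.eval s₀ (Term.var x') = v := by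
        simp [Term.eval, hs₀, Store.upd]
      rw [hx'] at hψsat
      exact (SymHeap.sat_coincide (fun y hy => hcoin y (fun h => hψ (h ▸ hy)))).mp hψsat
    have hev : Term.eval s t = σ'.1 x := by
      have h1 : Term.eval s₀ (Term.var x) = σ'.1 x := by
        simp [Term.eval, hs₀, Store.upd, Ne.symm hne]
      have h2 : Term.eval s₀ (Term.subst t x (Term.var x')) = Term.eval s t := by
        rw [Term.eval_subst]
        have : Term.eval s₀ (Term.var x') = v := by
          simp [Term.eval, hs₀, Store.upd]
        rw [this]
        exact Term.eval_coincide (fun y hy => hcoin y (fun h => ht (h ▸ hy)))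
      rw [← h2, ← heq, h1]
    refine ⟨(s, σ'.2), hψs, ?_⟩
    rw [hev]
    refine Prod.ext ?_ rfl
    funext y
    by_cases hyx : y = x
    · simp [hyx, Store.upd]
    · simp [Store.upd, hyx, hs]
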